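/- (Unbiasedness after selection) Let W ~ N(μ,1), Z ~ N(0,η²) independent, η, λ > 0, and define γ_RB = W - (1/η)·(φ(A₊) - φ(A₋))/(1 - Φ(A₊) + Φ(A₋)) with A± = -W/η ± λ/η. Then E[γ_RB | |W + Z| > λ] = μ. -/

import Mathlib

open MeasureTheory ProbabilityTheory Real Set Filter

/-- Standard normal density. -/
noncomputable def stdGaussPDF (x : ℝ) : ℝ := (Real.sqrt (2 * Real.pi))⁻¹ * Real.exp (-(x ^ 2) / 2)

/-- Standard normal CDF. -/
noncomputable def stdGaussCDF (x : ℝ) : ℝ := ∫ t in Set.Iic x, stdGaussPDF t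

namespace RB


lemma phi_eq : stdGaussPDF = gaussianPDFReal 0 1 := by
  funext x; simp [stdGaussPDF, gaussianPDFReal]

lemma phi_pos (x : ℝ) : 0 < stdGaussPDF x := by unfold stdGaussPDF; positivity

lemma phi_le (x : ℝ) : stdGaussPDF x ≤ (Real.sqrt (2 * Real.pi))⁻¹ := by
  unfold stdGaussPDF
  have h1 : Real.exp (-(x ^ 2) / 2) ≤ 1 := by
    rw [Real.exp_le_one_iff]; nlinarith [sq_nonneg x]
  have h2 : (0:ℝ) ≤ (Real.sqrt (2 * Real.pi))⁻¹ := by positivity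
  nlinarith

lemma integrable_phi : Integrable stdGaussPDF := phi_eq ▸ integrable_gaussianPDFReal 0 1

lemma cont_phi : Continuous stdGaussPDF := by
  unfold stdGaussPDF; fun_prop

lemma meas_phi : Measurable stdGaussPDF := cont_phi.measurable

lemma int_phi : ∫ x, stdGaussPDF x = 1 := by
  rw [phi_eq]; exact integral_gaussianPDFReal_eq_one 0 one_ne_zero

lemma cdf_nonneg (a : ℝ) : 0 ≤ stdGaussCDF a :=
  setIntegral_nonneg measurableSet_Iic (fun x _ => (phi_pos x).le)

lemma cdf_add_tail (a : ℝ) : stdGaussCDF a + ∫ x in Ioi a, stdGaussPDF x = 1 := by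
  have h := setIntegral_union (Iic_disjoint_Ioi (le_refl a)) measurableSet_Ioi
    integrable_phi.integrableOn integrable_phi.integrableOn (μ := volume) (f := stdGaussPDF)
  rw [Iic_union_Ioi, setIntegral_univ, int_phi] at h
  exact h.symm

lemma tail_pos (a : ℝ) : 0 < ∫ x in Ioi a, stdGaussPDF x := by
  rw [setIntegral_pos_iff_support_of_nonneg_ae (ae_of_all _ (fun x => (phi_pos x).le))
    integrable_phi.integrableOn]
  have : Function.support stdGaussPDF = univ := by
    ext x; simp [(phi_pos x).ne']
  rw [this, univ_inter, Real.volume_Ioi]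
  simp

lemma cdf_pos (a : ℝ) : 0 < stdGaussCDF a := by
  unfold stdGaussCDF
  rw [setIntegral_pos_iff_support_of_nonneg_ae (ae_of_all _ (fun x => (phi_pos x).le))
    integrable_phi.integrableOn]
  have : Function.support stdGaussPDF = univ := by
    ext x; simp [(phi_pos x).ne']
  rw [this, univ_inter, Real.volume_Iic]
  simp

lemma cdf_lt_one (a : ℝ) : stdGaussCDF a < 1 := by
  have h := cdf_add_tail a
  have := tail_pos a
  linarith

lemma cdf_le_one (a : ℝ) : stdGaussCDF a ≤ 1 := (cdf_lt_one a).le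

lemma cdf_mono : Monotone stdGaussCDF := by
  intro a b hab
  exact setIntegral_mono_set integrable_phi.integrableOn
    (ae_of_all _ (fun x => (phi_pos x).le)) (HasSubset.Subset.eventuallyLE (Iic_subset_Iic.2 hab))

lemma cdf_meas : Measurable stdGaussCDF := cdf_mono.measurable



lemma hasDerivAt_neg_phi (x : ℝ) :
    HasDerivAt (fun y => -stdGaussPDF y) (x * stdGaussPDF x) x := by
  have d1 : HasDerivAt (fun y : ℝ => -(y^2)/2) (-x) x := by
    have := (hasDerivAt_pow 2 x).neg.div_const 2
    simpa using this.congr_deriv (by ring)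
  have d2 := d1.exp
  have d3 := (d2.const_mul (Real.sqrt (2 * Real.pi))⁻¹).neg
  refine d3.congr_deriv ?_
  unfold stdGaussPDF
  ring

lemma tendsto_sq_atTop : Tendsto (fun x : ℝ => x^2) atTop atTop :=
  tendsto_pow_atTop (by norm_num)

lemma tendsto_sq_atBot : Tendsto (fun x : ℝ => x^2) atBot atTop := by
  have := tendsto_sq_atTop.comp tendsto_neg_atBot_atTop
  apply this.congr
  intro x; simp [Function.comp]

lemma tendsto_exp_part {l : Filter ℝ} (h : Tendsto (fun x : ℝ => x^2) l atTop) :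
    Tendsto stdGaussPDF l (nhds 0) := by
  have h1 : Tendsto (fun x : ℝ => -(x^2)/2) l atBot := by
    apply Tendsto.atBot_div_const (by norm_num)
    exact tendsto_neg_atTop_atBot.comp h
  have h2 := (Real.tendsto_exp_atBot).comp h1
  have h3 := h2.const_mul (Real.sqrt (2 * Real.pi))⁻¹
  rw [mul_zero] at h3
  exact h3

lemma tendsto_phi_atTop : Tendsto stdGaussPDF atTop (nhds 0) :=
  tendsto_exp_part tendsto_sq_atTop

lemma tendsto_phi_atBot : Tendsto stdGaussPDF atBot (nhds 0) :=
  tendsto_exp_part tendsto_sq_atBot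

lemma tendsto_neg_phi_atTop : Tendsto (fun y => -stdGaussPDF y) atTop (nhds 0) := by
  have := tendsto_phi_atTop.neg; rwa [neg_zero] at this

lemma tendsto_neg_phi_atBot : Tendsto (fun y => -stdGaussPDF y) atBot (nhds 0) := by
  have := tendsto_phi_atBot.neg; rwa [neg_zero] at this

lemma integrable_id_mul_phi : Integrable (fun x => x * stdGaussPDF x) := by
  have h := (integrable_mul_exp_neg_mul_sq (show (0:ℝ) < 2⁻¹ by norm_num)).const_mul
    (Real.sqrt (2 * Real.pi))⁻¹
  apply h.congr
  filter_upwards with x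
  unfold stdGaussPDF
  rw [show -(2⁻¹:ℝ) * x^2 = -(x^2)/2 by ring]
  ring

lemma ftc_Ioi (a : ℝ) : ∫ x in Ioi a, x * stdGaussPDF x = stdGaussPDF a := by
  have h := integral_Ioi_of_hasDerivAt_of_tendsto' (a := a) (m := 0)
    (fun x _ => hasDerivAt_neg_phi x) integrable_id_mul_phi.integrableOn
    tendsto_neg_phi_atTop
  simpa using h

lemma ftc_Iic (b : ℝ) : ∫ x in Iic b, x * stdGaussPDF x = -stdGaussPDF b := by
  have h := integral_Iic_of_hasDerivAt_of_tendsto' (a := b) (m := 0)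
    (fun x _ => hasDerivAt_neg_phi x) integrable_id_mul_phi.integrableOn
    tendsto_neg_phi_atBot
  simpa using h

lemma swap_sub (F : ℝ → ℝ) (d : ℝ) : ∫ x, F (d - x) = ∫ x, F x := by
  have h1 : ∫ x, F (d - x) = ∫ x, (fun y => F (-y)) (x - d) := by
    congr 1; funext x; simp [neg_sub]
  rw [h1, integral_sub_right_eq_self (fun y => F (-y)) d, integral_neg_eq_self]



variable {η : ℝ}

lemma q_eq (hη : 0 < η) :
    gaussianPDFReal 0 ⟨η^2, sq_nonneg η⟩ = fun z => η⁻¹ * stdGaussPDF (z/η) := by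
  funext z
  have hc : ((⟨η^2, sq_nonneg η⟩ : NNReal) : ℝ) = η ^ 2 := rfl
  simp only [gaussianPDFReal, stdGaussPDF, sub_zero]
  change (√(2 * π * η ^ 2))⁻¹ * rexp (-z ^ 2 / (2 * η ^ 2)) = _
  have hs : Real.sqrt (2 * π * η ^ 2) = Real.sqrt (2 * π) * η := by
    rw [Real.sqrt_mul (by positivity), Real.sqrt_sq hη.le]
  rw [hs, mul_inv]
  have he : -((z / η) ^ 2) / 2 = -z ^ 2 / (2 * η ^ 2) := by
    rw [div_pow, neg_div, neg_div, div_div, mul_comm (η^2) 2]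
  rw [he]; ring

lemma q_tail (hη : 0 < η) (a : ℝ) :
    ∫ z in Ioi a, η⁻¹ * stdGaussPDF (z/η) = 1 - stdGaussCDF (a/η) := by
  have h := integral_comp_mul_left_Ioi (g := stdGaussPDF) a (inv_pos.2 hη)
  have htail := cdf_add_tail (a / η)
  rw [integral_const_mul]
  simp only [div_eq_inv_mul]
  rw [h, inv_inv, smul_eq_mul]
  rw [inv_mul_cancel_left₀ hη.ne']
  rw [div_eq_inv_mul] at htail
  linarith

lemma q_Iio (hη : 0 < η) (b : ℝ) :
    ∫ z in Iio b, η⁻¹ * stdGaussPDF (z/η) = stdGaussCDF (b/η) := by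
  have htot : ∫ z, η⁻¹ * stdGaussPDF (z/η) = 1 := by
    rw [← q_eq hη]
    exact integral_gaussianPDFReal_eq_one 0 (by
      intro h0
      have : ((⟨η^2, sq_nonneg η⟩ : NNReal) : ℝ) = 0 := by rw [h0]; rfl
      exact (pow_ne_zero 2 hη.ne') this)
  have hq_int : Integrable (fun z => η⁻¹ * stdGaussPDF (z/η)) := by
    rw [← q_eq hη]; exact integrable_gaussianPDFReal 0 _
  have hsplit := setIntegral_union (Iic_disjoint_Ioi (le_refl b)) measurableSet_Ioi
    hq_int.integrableOn hq_int.integrableOn (μ := volume)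
  rw [Iic_union_Ioi, setIntegral_univ, htot, q_tail hη b] at hsplit
  rw [← integral_Iic_eq_integral_Iio]
  linarith



/-- the selection slice set -/
lemma slice_eq (lam b : ℝ) (hlam : 0 < lam) :
    {x : ℝ | lam < |b + x|} = Iio (-lam - b) ∪ Ioi (lam - b) := by
  ext x
  simp only [mem_setOf_eq, mem_union, mem_Iio, mem_Ioi, lt_abs]
  constructor
  · rintro (h | h)
    · right; linarith
    · left; linarith
  · rintro (h | h)
    · right; linarith
    · left; linarith

lemma slice_integral {η : ℝ} (hη : 0 < η) {lam : ℝ} (hlam : 0 < lam) (b : ℝ) :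
    ∫ z in {z : ℝ | lam < |b + z|}, η⁻¹ * stdGaussPDF (z/η)
      = 1 - stdGaussCDF (-b/η + lam/η) + stdGaussCDF (-b/η - lam/η) := by
  have hq_int : Integrable (fun z => η⁻¹ * stdGaussPDF (z/η)) := by
    rw [← q_eq hη]; exact integrable_gaussianPDFReal 0 _
  rw [slice_eq lam b hlam]
  rw [setIntegral_union (by
      apply Set.disjoint_left.2
      intro z hz1 hz2
      simp only [mem_Iio, mem_Ioi] at hz1 hz2
      linarith) measurableSet_Ioi hq_int.integrableOn hq_int.integrableOn]
  rw [q_Iio hη, q_tail hη]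
  have h1 : (-lam - b)/η = -b/η - lam/η := by ring
  have h2 : (lam - b)/η = -b/η + lam/η := by ring
  rw [h1, h2]; ring

lemma g_pos {η lam : ℝ} (w : ℝ) :
    0 < 1 - stdGaussCDF (-w/η + lam/η) + stdGaussCDF (-w/η - lam/η) := by
  have := cdf_lt_one (-w/η + lam/η)
  have := cdf_pos (-w/η - lam/η)
  linarith

lemma g_lower {η lam : ℝ} (hη : 0 < η) (hlam : 0 < lam) (w : ℝ) :
    min (1 - stdGaussCDF (lam/η)) (stdGaussCDF (-(lam/η)))
      ≤ 1 - stdGaussCDF (-w/η + lam/η) + stdGaussCDF (-w/η - lam/η) := by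
  rcases le_or_gt 0 w with hw | hw
  · have h1 : -w/η + lam/η ≤ lam/η := by
      have : -w/η ≤ 0 := by
        apply div_nonpos_of_nonpos_of_nonneg <;> linarith
      linarith
    have := cdf_mono h1
    have := cdf_nonneg (-w/η - lam/η)
    have := min_le_left (1 - stdGaussCDF (lam/η)) (stdGaussCDF (-(lam/η)))
    linarith
  · have h1 : -(lam/η) ≤ -w/η - lam/η := by
      have : 0 ≤ -w/η := by
        apply div_nonneg _ hη.le; linarith
      have hl : -(lam/η) = 0 - lam/η := by ring
      have h2 : -w/η - lam/η = -w/η - lam/η := rfl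
      linarith
    have := cdf_mono h1
    have := cdf_le_one (-w/η + lam/η)
    have := min_le_right (1 - stdGaussCDF (lam/η)) (stdGaussCDF (-(lam/η)))
    linarith

lemma gmin_pos {η lam : ℝ} (hη : 0 < η) (hlam : 0 < lam) :
    0 < min (1 - stdGaussCDF (lam/η)) (stdGaussCDF (-(lam/η))) := by
  have := cdf_lt_one (lam/η)
  have := cdf_pos (-(lam/η))
  exact lt_min (by linarith) this



lemma pdfW_eq (μ : ℝ) : gaussianPDFReal μ 1 = fun w => stdGaussPDF (w - μ) := by
  funext w; simp [gaussianPDFReal, stdGaussPDF]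

lemma integrable_psi (μ : ℝ) : Integrable (fun w => stdGaussPDF (w - μ)) :=
  integrable_phi.comp_sub_right μ

lemma integrable_sub_mul_psi (μ : ℝ) : Integrable (fun w => (w - μ) * stdGaussPDF (w - μ)) :=
  integrable_id_mul_phi.comp_sub_right μ

lemma hasDerivAt_neg_psi (μ : ℝ) (w : ℝ) :
    HasDerivAt (fun y => -stdGaussPDF (y - μ)) ((w - μ) * stdGaussPDF (w - μ)) w := by
  have h1 : HasDerivAt (fun y : ℝ => y - μ) 1 w := (hasDerivAt_id w).sub_const μ
  have h2 := (hasDerivAt_neg_phi (w - μ)).comp w h1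
  exact h2.congr_deriv (mul_one _)

lemma tendsto_sub_const_atTop (μ : ℝ) : Tendsto (fun y : ℝ => y - μ) atTop atTop := by
  simpa [sub_eq_add_neg] using tendsto_atTop_add_const_right atTop (-μ) tendsto_id

lemma tendsto_sub_const_atBot (μ : ℝ) : Tendsto (fun y : ℝ => y - μ) atBot atBot := by
  simpa [sub_eq_add_neg] using tendsto_atBot_add_const_right atBot (-μ) tendsto_id

lemma ftc_Ioi' (μ a : ℝ) :
    ∫ w in Ioi a, (w - μ) * stdGaussPDF (w - μ) = stdGaussPDF (a - μ) := by
  have h := integral_Ioi_of_hasDerivAt_of_tendsto' (a := a) (m := 0)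
    (fun x _ => hasDerivAt_neg_psi μ x) (integrable_sub_mul_psi μ).integrableOn
    (tendsto_neg_phi_atTop.comp (tendsto_sub_const_atTop μ))
  simpa using h

lemma ftc_Iic' (μ b : ℝ) :
    ∫ w in Iic b, (w - μ) * stdGaussPDF (w - μ) = -stdGaussPDF (b - μ) := by
  have h := integral_Iic_of_hasDerivAt_of_tendsto' (a := b) (m := 0)
    (fun x _ => hasDerivAt_neg_psi μ x) (integrable_sub_mul_psi μ).integrableOn
    (tendsto_neg_phi_atBot.comp (tendsto_sub_const_atBot μ))
  simpa using h

lemma integral_gaussianReal_eq (m : ℝ) (vv : NNReal) (hvv : vv ≠ 0) (h : ℝ → ℝ) :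
    ∫ x, h x ∂(gaussianReal m vv) = ∫ x, gaussianPDFReal m vv x * h x := by
  rw [gaussianReal_of_var_ne_zero m hvv]
  have hpdf : gaussianPDF m vv = fun x => ((gaussianPDFReal m vv x).toNNReal : ENNReal) := rfl
  rw [hpdf, integral_withDensity_eq_integral_smul
    ((measurable_gaussianPDFReal m vv).real_toNNReal) h]
  congr 1; funext x
  rw [NNReal.smul_def, smul_eq_mul, Real.coe_toNNReal _ (gaussianPDFReal_nonneg m vv x)]

lemma integrable_gaussianReal_iff (m : ℝ) (vv : NNReal) (hvv : vv ≠ 0) (h : ℝ → ℝ)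
    (hm : Measurable h) :
    Integrable h (gaussianReal m vv) ↔ Integrable (fun x => h x * gaussianPDFReal m vv x) := by
  rw [gaussianReal_of_var_ne_zero m hvv]
  rw [integrable_withDensity_iff (measurable_gaussianPDF m vv)
    (ae_of_all _ (fun x => ENNReal.ofReal_lt_top))]
  apply integrable_congr
  filter_upwards with x
  rw [gaussianPDF, ENNReal.toReal_ofReal (gaussianPDFReal_nonneg m vv x)]


end RB


open RB

set_option maxHeartbeats 2000000 in
/-- Unbiasedness after selection: with `W ~ N(μ,1)`, `Z ~ N(0,η²)` independent, `η, λ > 0`, the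
Rao–Blackwellized estimator `γ_RB = W - (1/η)(φ(A₊) - φ(A₋))/(1 - Φ(A₊) + Φ(A₋))`,
`A± = -W/η ± λ/η`, satisfies `E[γ_RB | |W + Z| > λ] = μ`. -/
theorem rao_blackwell_unbiased_after_selection
    {Ω : Type*} [MeasurableSpace Ω] (P : Measure Ω) [IsProbabilityMeasure P]
    (W Z : Ω → ℝ) (hWmeas : Measurable W) (hZmeas : Measurable Z)
    (μ η lam : ℝ) (hη : 0 < η) (hlam : 0 < lam)
    (hWlaw : Measure.map W P = gaussianReal μ 1)
    (hZlaw : Measure.map Z P = gaussianReal 0 ⟨η ^ 2, sq_nonneg η⟩)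
    (hindep : IndepFun W Z P) :
    (∫ ω, (W ω - (1 / η) *
        (stdGaussPDF (-(W ω) / η + lam / η) - stdGaussPDF (-(W ω) / η - lam / η)) /
        (1 - stdGaussCDF (-(W ω) / η + lam / η) + stdGaussCDF (-(W ω) / η - lam / η)))
      ∂(P[|{ω | lam < |W ω + Z ω|}])) = μ := by
  have hv : (⟨η^2, sq_nonneg η⟩ : NNReal) ≠ 0 := by
    intro h0
    have h1 : ((⟨η^2, sq_nonneg η⟩ : NNReal) : ℝ) = 0 := by rw [h0]; rfl
    exact pow_ne_zero 2 hη.ne' h1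
  set v : NNReal := ⟨η^2, sq_nonneg η⟩ with hvdef
  set γW := gaussianReal μ 1 with hγW
  set γZ := gaussianReal 0 v with hγZ
  -- basic functions
  set g : ℝ → ℝ := fun w => 1 - stdGaussCDF (-w/η + lam/η) + stdGaussCDF (-w/η - lam/η) with hg
  set r : ℝ → ℝ := fun w => w - (1/η) *
      (stdGaussPDF (-w/η + lam/η) - stdGaussPDF (-w/η - lam/η)) / g w with hr
  -- pointwise facts
  have hη' : (0:ℝ) < η⁻¹ := inv_pos.2 hη
  have hψ_meas : Measurable (fun w : ℝ => stdGaussPDF (w - μ)) :=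
    meas_phi.comp (measurable_id.sub_const μ)
  set q : ℝ → ℝ := fun z => η⁻¹ * stdGaussPDF (z/η) with hqdef
  have hq_meas : Measurable q := (meas_phi.comp (measurable_id.div_const η)).const_mul η⁻¹
  have hq_pos : ∀ z, 0 < q z := fun z => mul_pos hη' (phi_pos _)
  have hq_int : Integrable q := by
    rw [hqdef, ← q_eq hη]; exact integrable_gaussianPDFReal 0 _
  have haP_meas : Measurable (fun w : ℝ => -w/η + lam/η) :=
    (measurable_id.neg.div_const η).add_const _
  have haM_meas : Measurable (fun w : ℝ => -w/η - lam/η) :=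
    (measurable_id.neg.div_const η).sub_const _
  have hg_meas : Measurable g := by
    rw [hg]
    exact (measurable_const.sub (cdf_meas.comp haP_meas)).add (cdf_meas.comp haM_meas)
  have hg_pos : ∀ w, 0 < g w := by
    intro w; simp only [hg]; exact g_pos w
  have hg_le2 : ∀ w, g w ≤ 2 := by
    intro w
    have h1 := cdf_nonneg (-w/η + lam/η)
    have h2 := cdf_le_one (-w/η - lam/η)
    simp only [hg]; linarith
  set c₀ : ℝ := min (1 - stdGaussCDF (lam/η)) (stdGaussCDF (-(lam/η))) with hc₀def
  have hc₀ : 0 < c₀ := gmin_pos hη hlam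
  have hglb : ∀ w, c₀ ≤ g w := by
    intro w; simp only [hg, hc₀def]; exact g_lower hη hlam w
  set M : ℝ := (Real.sqrt (2 * Real.pi))⁻¹ with hMdef
  have hM : 0 < M := by
    rw [hMdef]
    have : (0:ℝ) < Real.sqrt (2 * Real.pi) := Real.sqrt_pos.2 (by positivity)
    positivity
  set C : ℝ := (1/η) * (2 * M) / c₀ with hCdef
  have hC : 0 < C := by
    apply div_pos _ hc₀
    apply mul_pos (by positivity) (by positivity)
  have hrb : ∀ w, |r w| ≤ |w| + C := by
    intro w
    have hb1 : |stdGaussPDF (-w/η + lam/η) - stdGaussPDF (-w/η - lam/η)| ≤ 2 * M := by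
      have p1 := phi_le (-w/η + lam/η)
      have p2 := phi_le (-w/η - lam/η)
      have p3 := (phi_pos (-w/η + lam/η)).le
      have p4 := (phi_pos (-w/η - lam/η)).le
      rw [abs_le]; constructor <;> simp only [hMdef] <;> [linarith; linarith]
    have hterm : |(1/η) * (stdGaussPDF (-w/η + lam/η) - stdGaussPDF (-w/η - lam/η)) / g w| ≤ C := by
      rw [abs_div, abs_mul, abs_of_pos (hg_pos w), abs_of_pos (by positivity : (0:ℝ) < 1/η), hCdef]
      apply div_le_div₀ (by positivity) _ hc₀ (hglb w)
      exact mul_le_mul_of_nonneg_left hb1 (by positivity)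
    have : |r w| ≤ |w| + |(1/η) * (stdGaussPDF (-w/η + lam/η) - stdGaussPDF (-w/η - lam/η)) / g w| := by
      simp only [hr]
      rw [sub_eq_add_neg]
      refine (abs_add_le _ _).trans ?_
      rw [abs_neg]
    linarith
  have hr_meas : Measurable r := by
    rw [hr]
    exact measurable_id.sub
      ((((meas_phi.comp haP_meas).sub (meas_phi.comp haM_meas)).const_mul (1/η)).div hg_meas)
  have hrg : ∀ w, r w * g w = w * g w
      - (1/η) * (stdGaussPDF (-w/η + lam/η) - stdGaussPDF (-w/η - lam/η)) := by
    intro w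
    simp only [hr]
    rw [sub_mul, div_mul_cancel₀ _ (hg_pos w).ne']
  -- sets and joint law
  set T : Set (ℝ × ℝ) := {p | lam < |p.1 + p.2|} with hT
  have hTmeas : MeasurableSet T :=
    measurableSet_lt measurable_const ((measurable_fst.add measurable_snd).abs)
  set S : Set Ω := {ω | lam < |W ω + Z ω|} with hSdef
  have hSmeas : MeasurableSet S :=
    measurableSet_lt measurable_const ((hWmeas.add hZmeas).abs)
  have hpair : Measurable fun ω => (W ω, Z ω) := hWmeas.prodMk hZmeas
  have hjoint : Measure.map (fun ω => (W ω, Z ω)) P = γW.prod γZ := by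
    rw [← hWlaw, ← hZlaw]
    exact (indepFun_iff_map_prod_eq_prod_map_map hWmeas.aemeasurable hZmeas.aemeasurable).1 hindep
  have hUmeas : ∀ b : ℝ, MeasurableSet {z : ℝ | lam < |b + z|} := fun b =>
    measurableSet_lt measurable_const ((measurable_const.add measurable_id).abs)
  have hgint : ∀ b : ℝ, ∫ z in {z : ℝ | lam < |b + z|}, q z = g b := by
    intro b
    simp only [hg, hqdef]
    exact slice_integral hη hlam b
  have hslice : ∀ b : ℝ, γZ {z : ℝ | lam < |b + z|} = ENNReal.ofReal (g b) := by
    intro b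
    rw [hγZ, hvdef, gaussianReal_apply_eq_integral 0 hv, q_eq hη, ← hqdef, hgint b]
  -- denominator
  have hg_int_γW : Integrable g γW := by
    apply Integrable.mono' (integrable_const 2) hg_meas.aestronglyMeasurable
    filter_upwards with w
    rw [Real.norm_eq_abs, abs_of_pos (hg_pos w)]
    exact hg_le2 w
  have hψg_int : Integrable (fun w => stdGaussPDF (w - μ) * g w) := by
    apply Integrable.mono' ((integrable_psi μ).const_mul 2)
      (hψ_meas.mul hg_meas).aestronglyMeasurable
    filter_upwards with w
    simp only [Real.norm_eq_abs, Pi.mul_apply]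
    rw [abs_mul, abs_of_pos (phi_pos (w - μ)), abs_of_pos (hg_pos w)]
    calc stdGaussPDF (w - μ) * g w ≤ stdGaussPDF (w - μ) * 2 :=
          mul_le_mul_of_nonneg_left (hg_le2 w) (phi_pos _).le
      _ = 2 * stdGaussPDF (w - μ) := mul_comm _ _
  have hPS : P S = ENNReal.ofReal (∫ w, stdGaussPDF (w - μ) * g w) := by
    have hSpre : S = (fun ω => (W ω, Z ω)) ⁻¹' T := rfl
    rw [hSpre, ← Measure.map_apply hpair hTmeas, hjoint, Measure.prod_apply hTmeas]
    have h1 : ∀ w : ℝ, γZ (Prod.mk w ⁻¹' T) = ENNReal.ofReal (g w) := fun w => hslice w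
    simp_rw [h1]
    rw [← ofReal_integral_eq_lintegral_ofReal hg_int_γW (ae_of_all _ fun w => (hg_pos w).le)]
    congr 1
    rw [hγW, integral_gaussianReal_eq μ 1 one_ne_zero g, pdfW_eq μ]
  have hI0_pos : 0 < ∫ w, stdGaussPDF (w - μ) * g w := by
    rw [integral_pos_iff_support_of_nonneg_ae
      (ae_of_all _ fun w => (mul_pos (phi_pos (w - μ)) (hg_pos w)).le) hψg_int]
    have hsupp : Function.support (fun w => stdGaussPDF (w - μ) * g w) = univ := by
      ext w
      simp only [Function.mem_support, mem_univ, iff_true]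
      exact (mul_pos (phi_pos (w - μ)) (hg_pos w)).ne'
    rw [hsupp]
    simp
  -- numerator : reduction to a Lebesgue integral
  have hF_meas : Measurable (T.indicator (fun p : ℝ × ℝ => r p.1)) :=
    (hr_meas.comp measurable_fst).indicator hTmeas
  have hIdγW : Integrable (fun x : ℝ => x) γW := by
    rw [hγW, integrable_gaussianReal_iff μ 1 one_ne_zero (fun x => x) measurable_id, pdfW_eq μ]
    have he : (fun x : ℝ => x * stdGaussPDF (x - μ))
        = fun x => (x - μ) * stdGaussPDF (x - μ) + μ * stdGaussPDF (x - μ) := by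
      funext x; ring
    rw [he]
    exact (integrable_sub_mul_psi μ).add ((integrable_psi μ).const_mul μ)
  have hmaj_int : Integrable (fun p : ℝ × ℝ => |p.1| + C) (γW.prod γZ) := by
    have h1 : Integrable (fun w : ℝ => |w| + C) γW := hIdγW.abs.add (integrable_const C)
    have h2 := h1.mul_prod (integrable_const (1:ℝ) (μ := γZ))
    apply h2.congr
    filter_upwards with p
    rw [mul_one]
  have hF_int : Integrable (T.indicator (fun p : ℝ × ℝ => r p.1)) (γW.prod γZ) := by
    apply Integrable.mono' hmaj_int hF_meas.aestronglyMeasurable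
    filter_upwards with p
    calc ‖T.indicator (fun p : ℝ × ℝ => r p.1) p‖ ≤ ‖r p.1‖ := norm_indicator_le_norm_self _ _
      _ ≤ |p.1| + C := by rw [Real.norm_eq_abs]; exact hrb p.1
  have hNum : ∫ ω in S, r (W ω) ∂P = ∫ w, stdGaussPDF (w - μ) * (r w * g w) := by
    rw [← integral_indicator hSmeas]
    have hind : ∀ ω, S.indicator (fun ω => r (W ω)) ω
        = T.indicator (fun p : ℝ × ℝ => r p.1) (W ω, Z ω) := by
      intro ω
      by_cases h : ω ∈ S
      · rw [Set.indicator_of_mem h, Set.indicator_of_mem (by exact h)]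
      · rw [Set.indicator_of_notMem h, Set.indicator_of_notMem (by exact h)]
    simp_rw [hind]
    rw [← integral_map hpair.aemeasurable hF_meas.aestronglyMeasurable, hjoint,
      integral_prod _ hF_int]
    have hinner : ∀ w : ℝ, (∫ z, T.indicator (fun p : ℝ × ℝ => r p.1) (w, z) ∂γZ)
        = r w * g w := by
      intro w
      have h1 : (fun z => T.indicator (fun p : ℝ × ℝ => r p.1) (w, z))
          = fun z => ({z : ℝ | lam < |w + z|}).indicator (fun _ => r w) z := by
        funext z
        by_cases h : lam < |w + z|
        · rw [Set.indicator_of_mem (by exact h), Set.indicator_of_mem (by exact h)]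
        · rw [Set.indicator_of_notMem (by exact h), Set.indicator_of_notMem (by exact h)]
      rw [h1, integral_indicator_const (r w) (hUmeas w), measureReal_def, hslice w,
        ENNReal.toReal_ofReal (hg_pos w).le, smul_eq_mul, mul_comm]
    simp_rw [hinner]
    rw [hγW, integral_gaussianReal_eq μ 1 one_ne_zero, pdfW_eq μ]
  -- KEY identity via Fubini
  have hKint : Integrable
      (T.indicator (fun p : ℝ × ℝ => q p.2 * ((p.1 - μ) * stdGaussPDF (p.1 - μ))))
      ((volume : Measure ℝ).prod (volume : Measure ℝ)) := by
    have hmaj := (integrable_sub_mul_psi μ).abs.mul_prod hq_int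
    apply Integrable.mono' hmaj
    · exact (((hq_meas.comp measurable_snd).mul
        ((measurable_fst.sub_const μ).mul
          (meas_phi.comp (measurable_fst.sub_const μ)))).indicator hTmeas).aestronglyMeasurable
    filter_upwards with p
    calc ‖T.indicator (fun p : ℝ × ℝ => q p.2 * ((p.1 - μ) * stdGaussPDF (p.1 - μ))) p‖
        ≤ ‖q p.2 * ((p.1 - μ) * stdGaussPDF (p.1 - μ))‖ := norm_indicator_le_norm_self _ _
      _ = |(p.1 - μ) * stdGaussPDF (p.1 - μ)| * q p.2 := by
          rw [Real.norm_eq_abs, abs_mul, abs_of_pos (hq_pos p.2)]; ring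
  have hKinner1 : ∀ w : ℝ,
      (∫ z, T.indicator (fun p : ℝ × ℝ => q p.2 * ((p.1 - μ) * stdGaussPDF (p.1 - μ))) (w, z))
        = stdGaussPDF (w - μ) * ((w - μ) * g w) := by
    intro w
    have h1 : (fun z => T.indicator
          (fun p : ℝ × ℝ => q p.2 * ((p.1 - μ) * stdGaussPDF (p.1 - μ))) (w, z))
        = fun z => ((w - μ) * stdGaussPDF (w - μ))
            * ({z : ℝ | lam < |w + z|}).indicator q z := by
      funext z
      by_cases h : lam < |w + z|
      · rw [Set.indicator_of_mem (by exact h), Set.indicator_of_mem (by exact h)]; ring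
      · rw [Set.indicator_of_notMem (by exact h), Set.indicator_of_notMem (by exact h),
          mul_zero]
    rw [h1, integral_const_mul, integral_indicator (hUmeas w), hgint w]
    ring
  have hKinner2 : ∀ z : ℝ,
      (∫ w, T.indicator (fun p : ℝ × ℝ => q p.2 * ((p.1 - μ) * stdGaussPDF (p.1 - μ))) (w, z))
        = q z * (stdGaussPDF (lam - z - μ) - stdGaussPDF (-lam - z - μ)) := by
    intro z
    have hdisj : Disjoint (Iio (-lam - z)) (Ioi (lam - z)) := by
      apply Set.disjoint_left.2
      intro x hx1 hx2
      simp only [mem_Iio, mem_Ioi] at hx1 hx2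
      linarith
    have hmem : ∀ w : ℝ, ((w, z) ∈ T) ↔ (w ∈ Iio (-lam - z) ∪ Ioi (lam - z)) := by
      intro w
      rw [← slice_eq lam z hlam]
      simp only [hT, mem_setOf_eq]
      rw [add_comm]
    have h2 : (fun w => T.indicator
          (fun p : ℝ × ℝ => q p.2 * ((p.1 - μ) * stdGaussPDF (p.1 - μ))) (w, z))
        = fun w => q z * ((Iio (-lam - z) ∪ Ioi (lam - z)).indicator
            (fun w => (w - μ) * stdGaussPDF (w - μ)) w) := by
      funext w
      by_cases h : (w, z) ∈ T
      · rw [Set.indicator_of_mem h, Set.indicator_of_mem ((hmem w).1 h)]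
      · rw [Set.indicator_of_notMem h,
          Set.indicator_of_notMem (fun hc => h ((hmem w).2 hc)), mul_zero]
    rw [h2, integral_const_mul, integral_indicator (measurableSet_Iio.union measurableSet_Ioi),
      setIntegral_union hdisj measurableSet_Ioi (integrable_sub_mul_psi μ).integrableOn
        (integrable_sub_mul_psi μ).integrableOn,
      ← integral_Iic_eq_integral_Iio, ftc_Iic' μ (-lam - z), ftc_Ioi' μ (lam - z)]
    ring
  have hswap : (∫ w, ∫ z, T.indicator
        (fun p : ℝ × ℝ => q p.2 * ((p.1 - μ) * stdGaussPDF (p.1 - μ))) (w, z))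
      = ∫ z, ∫ w, T.indicator
        (fun p : ℝ × ℝ => q p.2 * ((p.1 - μ) * stdGaussPDF (p.1 - μ))) (w, z) :=
    integral_integral_swap hKint

  have hKEYlhs : (∫ w, stdGaussPDF (w - μ) * ((w - μ) * g w))
      = ∫ z, q z * (stdGaussPDF (lam - z - μ) - stdGaussPDF (-lam - z - μ)) := by
    calc (∫ w, stdGaussPDF (w - μ) * ((w - μ) * g w))
        = ∫ w, ∫ z, T.indicator
            (fun p : ℝ × ℝ => q p.2 * ((p.1 - μ) * stdGaussPDF (p.1 - μ))) (w, z) := by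
          apply integral_congr_ae; filter_upwards with w; exact (hKinner1 w).symm
      _ = ∫ z, ∫ w, T.indicator
            (fun p : ℝ × ℝ => q p.2 * ((p.1 - μ) * stdGaussPDF (p.1 - μ))) (w, z) := hswap
      _ = ∫ z, q z * (stdGaussPDF (lam - z - μ) - stdGaussPDF (-lam - z - μ)) := by
          apply integral_congr_ae; filter_upwards with z; exact hKinner2 z
  have hsub1 : (∫ z, q z * stdGaussPDF (lam - z - μ))
      = ∫ w, (η⁻¹ * stdGaussPDF (-w/η + lam/η)) * stdGaussPDF (w - μ) := by
    calc (∫ z, q z * stdGaussPDF (lam - z - μ))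
        = ∫ z, (fun x => q (lam - x) * stdGaussPDF (x - μ)) (lam - z) := by
          apply integral_congr_ae; filter_upwards with z
          show q z * stdGaussPDF (lam - z - μ)
            = q (lam - (lam - z)) * stdGaussPDF ((lam - z) - μ)
          rw [sub_sub_cancel]
      _ = ∫ x, q (lam - x) * stdGaussPDF (x - μ) :=
          swap_sub (fun x => q (lam - x) * stdGaussPDF (x - μ)) lam
      _ = ∫ w, (η⁻¹ * stdGaussPDF (-w/η + lam/η)) * stdGaussPDF (w - μ) := by
          apply integral_congr_ae; filter_upwards with w
          simp only [hqdef]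
          rw [show (lam - w)/η = -w/η + lam/η by ring]
  have hsub2 : (∫ z, q z * stdGaussPDF (-lam - z - μ))
      = ∫ w, (η⁻¹ * stdGaussPDF (-w/η - lam/η)) * stdGaussPDF (w - μ) := by
    calc (∫ z, q z * stdGaussPDF (-lam - z - μ))
        = ∫ z, (fun x => q (-lam - x) * stdGaussPDF (x - μ)) (-lam - z) := by
          apply integral_congr_ae; filter_upwards with z
          show q z * stdGaussPDF (-lam - z - μ)
            = q (-lam - (-lam - z)) * stdGaussPDF ((-lam - z) - μ)
          rw [sub_sub_cancel]
      _ = ∫ x, q (-lam - x) * stdGaussPDF (x - μ) :=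
          swap_sub (fun x => q (-lam - x) * stdGaussPDF (x - μ)) (-lam)
      _ = ∫ w, (η⁻¹ * stdGaussPDF (-w/η - lam/η)) * stdGaussPDF (w - μ) := by
          apply integral_congr_ae; filter_upwards with w
          simp only [hqdef]
          rw [show (-lam - w)/η = -w/η - lam/η by ring]
  have hbd1 : Integrable (fun z => q z * stdGaussPDF (lam - z - μ)) := by
    have h := Integrable.bdd_mul (f := fun z => stdGaussPDF (lam - z - μ)) hq_int
      (meas_phi.comp ((measurable_const.sub measurable_id).sub_const μ)).aestronglyMeasurable
      (c := M) (ae_of_all _ fun z => by rw [Real.norm_eq_abs, abs_of_pos (phi_pos _), hMdef]; exact phi_le _)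
    apply h.congr
    filter_upwards with z
    exact mul_comm _ _
  have hbd2 : Integrable (fun z => q z * stdGaussPDF (-lam - z - μ)) := by
    have h := Integrable.bdd_mul (f := fun z => stdGaussPDF (-lam - z - μ)) hq_int
      (meas_phi.comp ((measurable_const.sub measurable_id).sub_const μ)).aestronglyMeasurable
      (c := M) (ae_of_all _ fun z => by rw [Real.norm_eq_abs, abs_of_pos (phi_pos _), hMdef]; exact phi_le _)
    apply h.congr
    filter_upwards with z
    exact mul_comm _ _
  have hbw1 : Integrable (fun w => (η⁻¹ * stdGaussPDF (-w/η + lam/η)) * stdGaussPDF (w - μ)) :=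
    Integrable.bdd_mul (f := fun w => η⁻¹ * stdGaussPDF (-w/η + lam/η)) (integrable_psi μ)
      ((meas_phi.comp haP_meas).const_mul η⁻¹).aestronglyMeasurable
      (c := η⁻¹ * M) (ae_of_all _ fun w => by
        rw [Real.norm_eq_abs, abs_of_pos (mul_pos hη' (phi_pos _)), hMdef]
        exact mul_le_mul_of_nonneg_left (phi_le _) hη'.le)
  have hbw2 : Integrable (fun w => (η⁻¹ * stdGaussPDF (-w/η - lam/η)) * stdGaussPDF (w - μ)) :=
    Integrable.bdd_mul (f := fun w => η⁻¹ * stdGaussPDF (-w/η - lam/η)) (integrable_psi μ)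
      ((meas_phi.comp haM_meas).const_mul η⁻¹).aestronglyMeasurable
      (c := η⁻¹ * M) (ae_of_all _ fun w => by
        rw [Real.norm_eq_abs, abs_of_pos (mul_pos hη' (phi_pos _)), hMdef]
        exact mul_le_mul_of_nonneg_left (phi_le _) hη'.le)
  have hKEY : (∫ w, stdGaussPDF (w - μ) * ((w - μ) * g w))
      = ∫ w, stdGaussPDF (w - μ)
          * ((1/η) * (stdGaussPDF (-w/η + lam/η) - stdGaussPDF (-w/η - lam/η))) := by
    rw [hKEYlhs]
    have e1 : (fun z => q z * (stdGaussPDF (lam - z - μ) - stdGaussPDF (-lam - z - μ)))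
        = fun z => q z * stdGaussPDF (lam - z - μ) - q z * stdGaussPDF (-lam - z - μ) := by
      funext z; ring
    rw [e1, integral_sub hbd1 hbd2, hsub1, hsub2, ← integral_sub hbw1 hbw2]
    apply integral_congr_ae; filter_upwards with w
    ring
  -- final integrabilities
  have hwψ_int : Integrable (fun w => w * stdGaussPDF (w - μ)) := by
    apply ((integrable_sub_mul_psi μ).add ((integrable_psi μ).const_mul μ)).congr
    filter_upwards with w
    simp only [Pi.add_apply]
    ring
  have hA1 : Integrable (fun w => stdGaussPDF (w - μ) * (w * g w)) := by
    apply Integrable.mono' (hwψ_int.abs.const_mul 2)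
      ((hψ_meas.mul (measurable_id.mul hg_meas)).aestronglyMeasurable)
    filter_upwards with w
    simp only [Real.norm_eq_abs, id_eq, Pi.mul_apply]
    have h1 : |stdGaussPDF (w - μ) * (w * g w)| = stdGaussPDF (w - μ) * (|w| * g w) := by
      rw [abs_mul, abs_of_pos (phi_pos (w - μ)), abs_mul, abs_of_pos (hg_pos w)]
    rw [h1]
    have h3 : stdGaussPDF (w - μ) * (|w| * g w) ≤ stdGaussPDF (w - μ) * (|w| * 2) :=
      mul_le_mul_of_nonneg_left (mul_le_mul_of_nonneg_left (hg_le2 w) (abs_nonneg w))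
        (phi_pos _).le
    refine h3.trans (le_of_eq ?_)
    rw [abs_mul, abs_of_pos (phi_pos (w - μ))]
    ring
  have hA2 : Integrable (fun w => stdGaussPDF (w - μ) * ((w - μ) * g w)) := by
    apply Integrable.mono' ((integrable_sub_mul_psi μ).abs.const_mul 2)
      ((hψ_meas.mul ((measurable_id.sub_const μ).mul hg_meas)).aestronglyMeasurable)
    filter_upwards with w
    simp only [Real.norm_eq_abs, id_eq, Pi.mul_apply]
    have h1 : |stdGaussPDF (w - μ) * ((w - μ) * g w)|
        = stdGaussPDF (w - μ) * (|w - μ| * g w) := by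
      rw [abs_mul, abs_of_pos (phi_pos (w - μ)), abs_mul, abs_of_pos (hg_pos w)]
    rw [h1]
    have h3 : stdGaussPDF (w - μ) * (|w - μ| * g w) ≤ stdGaussPDF (w - μ) * (|w - μ| * 2) :=
      mul_le_mul_of_nonneg_left (mul_le_mul_of_nonneg_left (hg_le2 w) (abs_nonneg _))
        (phi_pos _).le
    refine h3.trans (le_of_eq ?_)
    rw [abs_mul, abs_of_pos (phi_pos (w - μ))]
    ring
  have hA3 : Integrable (fun w => stdGaussPDF (w - μ)
      * ((1/η) * (stdGaussPDF (-w/η + lam/η) - stdGaussPDF (-w/η - lam/η)))) := by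
    have h := Integrable.bdd_mul
      (f := fun w => (1/η) * (stdGaussPDF (-w/η + lam/η) - stdGaussPDF (-w/η - lam/η)))
      (integrable_psi μ)
      (((meas_phi.comp haP_meas).sub (meas_phi.comp haM_meas)).const_mul (1/η)).aestronglyMeasurable
      (c := (1/η) * (2 * M)) (ae_of_all _ fun w => by
        rw [Real.norm_eq_abs, abs_mul, abs_of_pos (by positivity : (0:ℝ) < 1/η)]
        apply mul_le_mul_of_nonneg_left _ (by positivity)
        have p1 := phi_le (-w/η + lam/η)
        have p2 := phi_le (-w/η - lam/η)
        have p3 := (phi_pos (-w/η + lam/η)).le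
        have p4 := (phi_pos (-w/η - lam/η)).le
        rw [abs_le]; constructor <;> simp only [hMdef] <;> [linarith; linarith])
    apply h.congr
    filter_upwards with w
    exact mul_comm _ _
  have hNum2 : (∫ w, stdGaussPDF (w - μ) * (r w * g w))
      = μ * ∫ w, stdGaussPDF (w - μ) * g w := by
    have e : (fun w => stdGaussPDF (w - μ) * (r w * g w))
        = fun w => (stdGaussPDF (w - μ) * ((w - μ) * g w)
            + μ * (stdGaussPDF (w - μ) * g w))
            - stdGaussPDF (w - μ)
              * ((1/η) * (stdGaussPDF (-w/η + lam/η) - stdGaussPDF (-w/η - lam/η))) := by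
      funext w
      rw [hrg w]
      ring
    have hsum : Integrable (fun w => stdGaussPDF (w - μ) * ((w - μ) * g w)
        + μ * (stdGaussPDF (w - μ) * g w)) := by
      apply (hA2.add (hψg_int.const_mul μ)).congr
      filter_upwards with w
      simp [Pi.add_apply]
    rw [e, integral_sub hsum hA3, integral_add hA2 (hψg_int.const_mul μ),
      integral_const_mul, hKEY]
    ring
  -- conclusion
  show (∫ ω, r (W ω) ∂(P[|S])) = μ
  rw [show P[|S] = (P S)⁻¹ • P.restrict S from rfl, integral_smul_measure]
  rw [show (∫ ω, r (W ω) ∂(P.restrict S)) = ∫ ω in S, r (W ω) ∂P from rfl]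
  rw [hNum, hNum2, hPS]
  rw [ENNReal.toReal_inv, ENNReal.toReal_ofReal hI0_pos.le, smul_eq_mul]
  field_simp
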